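/- Define g₁(a,b,c) = (8/9)(a² − 2√2·ac + 2c²), g₄(a,b,c) = (2/3)(3a² + 2√3·ab + b²), and h(θ) = (cos θ + √3·sin θ + √(10 − cos(2θ) + √3·sin(2θ)))/(2√2). Then for every θ ∈ [0, π/3], setting φ = 2·arctan(h(θ)), one has g₁(cos θ sin φ, sin θ sin φ, cos φ) = g₄(cos θ sin φ, sin θ sin φ, cos φ). In particular, 2·arctan(h(0)) = 2·arctan(√2) and 2·arctan(h(π/3)) = 2·arctan((1 + √3)/√2). -/

import Mathlib

open Real

/-- First term of the maximum defining the squared-width function of the regular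
tetrahedron: `g₁(a,b,c) = (8/9)(a² − 2√2·ac + 2c²)`. -/
noncomputable def g₁ (a b c : ℝ) : ℝ :=
  (8/9) * (a ^ 2 - 2 * Real.sqrt 2 * a * c + 2 * c ^ 2)

/-- Fourth term of the maximum defining the squared-width function of the regular
tetrahedron: `g₄(a,b,c) = (2/3)(3a² + 2√3·ab + b²)`. -/
noncomputable def g₄ (a b c : ℝ) : ℝ :=
  (2/3) * (3 * a ^ 2 + 2 * Real.sqrt 3 * a * b + b ^ 2)

/-- `h(θ) = (cos θ + √3 sin θ + √(10 − cos 2θ + √3 sin 2θ)) / (2√2)`. -/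
noncomputable def h (θ : ℝ) : ℝ :=
  (Real.cos θ + Real.sqrt 3 * Real.sin θ +
    Real.sqrt (10 - Real.cos (2 * θ) + Real.sqrt 3 * Real.sin (2 * θ))) / (2 * Real.sqrt 2)

/-!
Since `g₁ = (8/9)(a − √2 c)²` and `g₄ = (2/3)(√3 a + b)²`, the two terms agree on the plane
`a + √3 b + 2√2 c = 0`. With `t = tan (φ/2)` the point `(cos θ sin φ, sin θ sin φ, cos φ)` lies on
that plane iff `√2 t² − (cos θ + √3 sin θ) t − √2 = 0`, and `h θ` is the positive root of this
quadratic: its discriminant `(cos θ + √3 sin θ)² + 8` is the radicand `10 − cos 2θ + √3 sin 2θ`.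
-/

lemma sin_two_mul_arctan (t : ℝ) : sin (2 * arctan t) = 2 * t / (1 + t ^ 2) := by
  have hpos : (0 : ℝ) < 1 + t ^ 2 := by positivity
  rw [sin_two_mul, sin_arctan, cos_arctan]
  field_simp
  rw [sq_sqrt hpos.le]

lemma cos_two_mul_arctan (t : ℝ) : cos (2 * arctan t) = (1 - t ^ 2) / (1 + t ^ 2) := by
  have hpos : (0 : ℝ) < 1 + t ^ 2 := by positivity
  rw [cos_two_mul, cos_arctan, div_pow, sq_sqrt hpos.le]
  field_simp
  ring

lemma g₁_eq_g₄_of_add_eq_zero {a b c : ℝ} (hp : a + √3 * b + 2 * √2 * c = 0) :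
    g₁ a b c = g₄ a b c := by
  have h2 : √2 ^ 2 = 2 := sq_sqrt (by norm_num)
  have h3 : √3 ^ 2 = 3 := sq_sqrt (by norm_num)
  have hlin : √3 * (√3 * a + b) = 2 * (a - √2 * c) := by linear_combination hp + a * h3
  have hsq : 3 * (√3 * a + b) ^ 2 = 4 * (a - √2 * c) ^ 2 := by
    linear_combination (√3 * (√3 * a + b) + 2 * (a - √2 * c)) * hlin - (√3 * a + b) ^ 2 * h3
  unfold g₁ g₄
  linear_combination (-2 / 9) * hsq - (8 / 9) * c ^ 2 * h2 + (2 / 3) * a ^ 2 * h3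

lemma spherical_point_add_eq_zero_of_quadratic {θ t : ℝ}
    (ht : √2 * (t * t) + -(cos θ + √3 * sin θ) * t + -√2 = 0) :
    cos θ * sin (2 * arctan t) + √3 * (sin θ * sin (2 * arctan t))
      + 2 * √2 * cos (2 * arctan t) = 0 := by
  have hpos : (0 : ℝ) < 1 + t ^ 2 := by positivity
  rw [sin_two_mul_arctan, cos_two_mul_arctan]
  field_simp
  linear_combination (-2) * ht

lemma h_eq (θ : ℝ) :
    h θ = (cos θ + √3 * sin θ + √((cos θ + √3 * sin θ) ^ 2 + 8)) / (2 * √2) := by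
  have h3 : √3 ^ 2 = 3 := sq_sqrt (by norm_num)
  have hradicand : 10 - cos (2 * θ) + √3 * sin (2 * θ) = (cos θ + √3 * sin θ) ^ 2 + 8 := by
    rw [cos_two_mul, sin_two_mul]
    linear_combination (-3) * sin_sq_add_cos_sq θ - sin θ ^ 2 * h3
  rw [h, hradicand]

lemma h_quadratic (θ : ℝ) :
    √2 * (h θ * h θ) + -(cos θ + √3 * sin θ) * h θ + -√2 = 0 := by
  have h2 : √2 ^ 2 = 2 := sq_sqrt (by norm_num)
  have hdiscrim : discrim √2 (-(cos θ + √3 * sin θ)) (-√2)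
      = √((cos θ + √3 * sin θ) ^ 2 + 8) * √((cos θ + √3 * sin θ) ^ 2 + 8) := by
    rw [mul_self_sqrt (by positivity), discrim]
    linear_combination 4 * h2
  rw [quadratic_eq_zero_iff (by positivity) hdiscrim, h_eq, neg_neg]
  exact Or.inl rfl

lemma h_zero : h 0 = √2 := by
  have h2 : √2 ^ 2 = 2 := sq_sqrt (by norm_num)
  rw [h_eq, cos_zero, sin_zero, show (1 + √3 * 0) ^ 2 + 8 = (3 : ℝ) ^ 2 by norm_num,
    sqrt_sq (by norm_num), div_eq_iff (by positivity)]
  linear_combination (-2) * h2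

lemma h_pi_div_three : h (π / 3) = (1 + √3) / √2 := by
  have h3 : √3 ^ 2 = 3 := sq_sqrt (by norm_num)
  have hu : cos (π / 3) + √3 * sin (π / 3) = 2 := by
    rw [cos_pi_div_three, sin_pi_div_three]
    linear_combination (1 / 2) * h3
  have h12 : √(2 ^ 2 + 8 : ℝ) = 2 * √3 := by
    rw [show (2 ^ 2 + 8 : ℝ) = 2 ^ 2 * 3 by norm_num, sqrt_mul (by norm_num),
      sqrt_sq (by norm_num)]
  rw [h_eq, hu, h12, div_eq_div_iff (by positivity) (by positivity)]
  ring

/-- Along the curve `φ(θ) = 2 arctan (h θ)`, the terms `g₁` and `g₄` of the tetrahedral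
squared-width function agree; in particular `φ(0) = 2 arctan √2` and
`φ(π/3) = 2 arctan ((1+√3)/√2)`. -/
theorem tetra_boundary_curve :
    (∀ θ ∈ Set.Icc (0 : ℝ) (π / 3),
      g₁ (Real.cos θ * Real.sin (2 * Real.arctan (h θ)))
          (Real.sin θ * Real.sin (2 * Real.arctan (h θ)))
          (Real.cos (2 * Real.arctan (h θ)))
        = g₄ (Real.cos θ * Real.sin (2 * Real.arctan (h θ)))
            (Real.sin θ * Real.sin (2 * Real.arctan (h θ)))
            (Real.cos (2 * Real.arctan (h θ)))) ∧
    2 * Real.arctan (h 0) = 2 * Real.arctan (Real.sqrt 2) ∧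
    2 * Real.arctan (h (π / 3)) = 2 * Real.arctan ((1 + Real.sqrt 3) / Real.sqrt 2) :=
  ⟨fun θ _ =>
    g₁_eq_g₄_of_add_eq_zero (spherical_point_add_eq_zero_of_quadratic (h_quadratic θ)),
    by rw [h_zero], by rw [h_pi_div_three]⟩
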